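/- Fix S, T ⊆ [n] with |S| = |T| and P_n(S,T) nonempty. For i ∉ T let h(i) = |T ∩ {i+1,…,n}| − |S ∩ {i+1,…,n}|. Then the multiset {h(i) : i ∈ [n]\T} equals the multiset of heights of the up-steps of the lattice path L(S,T), where an up-step from (x−1, y−1) to (x, y) has height y. -/

import Mathlib

open Finset
open scoped Classical

/-- descents of a list: number of positions i with l_i > l_{i+1} -/
def desList (l : List ℕ) : ℕ := ((l.zip l.tail).filter (fun p => p.2 < p.1)).length

/-- major index of a list (1-based positions) -/
def majList (l : List ℕ) : ℕ :=
  ∑ i ∈ Finset.range (l.length - 1), if l.getD (i+1) 0 < l.getD i 0 then i + 1 else 0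

/-- inversion number of a list -/
def invList (l : List ℕ) : ℕ :=
  ((Finset.range l.length ×ˢ Finset.range l.length).filter
    (fun p => p.1 < p.2 ∧ l.getD p.2 0 < l.getD p.1 0)).card

/-- number of 2-crossings of an arc set -/
def cr2 {α : Type*} [LinearOrder α] (A : Finset (α × α)) : ℕ :=
  ((A ×ˢ A).filter (fun p => p.1.1 < p.2.1 ∧ p.2.1 < p.1.2 ∧ p.1.2 < p.2.2)).card

/-- the label of an arc: arcs are labeled 1,…,k from right to left by left-hand endpoints -/
def labelArc {α : Type*} [LinearOrder α] (A : Finset (α × α)) (e : α × α) : ℕ :=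
  (A.filter (fun f => e.1 < f.1)).card + 1

/-- p-major index of an arc set: process endpoints in decreasing order, maintaining the
sequence σ of (arcs corresponding to) labels; at a left endpoint delete its arc, at a
right endpoint prepend the arc ending there and add the number of descents of the
label sequence σ. -/
noncomputable def pmajArcs {α : Type*} [LinearOrder α] (A : Finset (α × α)) : ℕ :=
  (((((A.image Prod.fst) ∪ (A.image Prod.snd)).sort (· ≤ ·)).reverse).foldl
    (fun (st : List (α × α) × ℕ) i =>
      let σ₁ := st.1.filter (fun e => e.1 ≠ i)
      let ends := (A.filter (fun e => e.2 = i)).toList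
      let σ₂ := ends ++ σ₁
      (σ₂, st.2 + if ends.isEmpty then 0 else desList (σ₂.map (labelArc A))))
    ([], 0)).2

/-- arcs of the standard representation of a partition of [n] = {1,…,n}:
pairs of consecutive elements of a block -/
noncomputable def arcsOf {n : ℕ} (P : Finpartition (Finset.Icc 1 n)) : Finset (ℕ × ℕ) :=
  ((Finset.Icc 1 n) ×ˢ (Finset.Icc 1 n)).filter (fun e =>
    e.1 < e.2 ∧ ∃ B ∈ P.parts, e.1 ∈ B ∧ e.2 ∈ B ∧ ∀ k ∈ B, e.1 < k → k < e.2 → False)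

/-- the set of minimal block elements of a partition of [n] -/
noncomputable def minsetOf {n : ℕ} (P : Finpartition (Finset.Icc 1 n)) : Finset ℕ :=
  (Finset.Icc 1 n).filter (fun i => ∃ B ∈ P.parts, i ∈ B ∧ ∀ j ∈ B, i ≤ j)

/-- the set of maximal block elements of a partition of [n] -/
noncomputable def maxsetOf {n : ℕ} (P : Finpartition (Finset.Icc 1 n)) : Finset ℕ :=
  (Finset.Icc 1 n).filter (fun i => ∃ B ∈ P.parts, i ∈ B ∧ ∀ j ∈ B, j ≤ i)

noncomputable instance finpartitionFintype (s : Finset ℕ) : Fintype (Finpartition s) := by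
  apply Fintype.ofInjective
    (fun P : Finpartition s =>
      (⟨P.parts, by
        simp only [Finset.mem_powerset]
        intro t ht
        exact Finset.mem_powerset.2 (P.le ht)⟩ : {t // t ∈ s.powerset.powerset}))
  intro P Q h
  have : P.parts = Q.parts := congrArg Subtype.val h
  cases P; cases Q; simpa using this

/-- P_n(S,T): partitions of [n] with block minima S and block maxima T -/
noncomputable def pnST (n : ℕ) (S T : Finset ℕ) : Finset (Finpartition (Finset.Icc 1 n)) :=
  Finset.univ.filter (fun P => minsetOf P = S ∧ maxsetOf P = T)

/-- h(i) = |T ∩ {i+1,…,n}| − |S ∩ {i+1,…,n}| -/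
def hST (n : ℕ) (S T : Finset ℕ) (i : ℕ) : ℕ :=
  (T ∩ Finset.Icc (i+1) n).card - (S ∩ Finset.Icc (i+1) n).card

/-- major index of a permutation of [n], via its word π(1)…π(n) -/
def majPerm {n : ℕ} (π : Equiv.Perm (Fin n)) : ℕ := majList (List.ofFn (fun i => (π i : ℕ) + 1))

/-- inversion number of a permutation of [n] -/
def invPerm {n : ℕ} (π : Equiv.Perm (Fin n)) : ℕ := invList (List.ofFn (fun i => (π i : ℕ) + 1))

/-- the matching M_π of [2m] with arcs (m+1-π(i), i+m) for 1 ≤ i ≤ m -/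
def Mpi (m : ℕ) (π : Equiv.Perm (Fin m)) : Finset (ℕ × ℕ) :=
  Finset.univ.image (fun i : Fin m => (m + 1 - ((π i : ℕ) + 1), ((i : ℕ) + 1) + m))

/-- vertical displacement of the k-th step (k = 1,…,2n) of the lattice path L(S,T):
the two steps for vertex i are steps 2i-1 and 2i; the first step goes down unless i ∈ S,
the second goes up unless i ∈ T. -/
def stepDelta (S T : Finset ℕ) (k : ℕ) : ℤ :=
  if k % 2 = 1 then (if (k + 1) / 2 ∈ S then 0 else -1) else (if k / 2 ∈ T then 0 else 1)

/-- the height (y-coordinate) of the lattice path L(S,T) after k steps -/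
def pathHt (S T : Finset ℕ) (k : ℕ) : ℤ := ∑ j ∈ Finset.Icc 1 k, stepDelta S T j

/-! The path is at height `#(S ∩ [1,i]) - #(T ∩ [1,i])` after its first `2i` steps, and its
up-steps are exactly the steps `2i` with `i ∉ T`; since `#S = #T`, that height equals
`#(T ∩ [i+1,n]) - #(S ∩ [i+1,n])`. This difference is `h(i)` because it is nonnegative: in a
partition with block minima `S` and block maxima `T`, sending a block minimum to the maximum
of its block injects `S ∩ [a,n]` into `T ∩ [a,n]`. -/

lemma Finpartition.sup_part_mem {α : Type*} [LinearOrder α] [OrderBot α] {s : Finset α}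
    (P : Finpartition s) {a : α} (ha : a ∈ s) : (P.part a).sup id ∈ P.part a := by
  obtain ⟨j, hj, hsup⟩ := exists_mem_eq_sup _ ⟨a, P.mem_part ha⟩ id
  exact hsup ▸ hj

section BlockMaxima

variable {n : ℕ} (P : Finpartition (Icc 1 n))

lemma sup_part_mem_maxsetOf {i : ℕ} (hi : i ∈ Icc 1 n) : (P.part i).sup id ∈ maxsetOf P :=
  mem_filter.2 ⟨P.le (P.part_mem.2 hi) (P.sup_part_mem hi), P.part i, P.part_mem.2 hi,
    P.sup_part_mem hi, fun _ hj => le_sup (f := id) hj⟩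

lemma le_of_mem_minsetOf_of_mem_part {i j : ℕ} (hi : i ∈ minsetOf P) (hj : j ∈ P.part i) :
    i ≤ j := by
  obtain ⟨-, B, hB, hiB, hmin⟩ := mem_filter.1 hi
  rw [P.part_eq_of_mem hB hiB] at hj
  exact hmin j hj

lemma minsetOf_subset : minsetOf P ⊆ Icc 1 n := filter_subset _ _

lemma maxsetOf_subset : maxsetOf P ⊆ Icc 1 n := filter_subset _ _

lemma injOn_sup_part_minsetOf : Set.InjOn (fun i => (P.part i).sup id) (minsetOf P) := by
  intro i₁ hmin₁ i₂ hmin₂ (hsup : (P.part i₁).sup id = (P.part i₂).sup id)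
  have hI₁ := minsetOf_subset P hmin₁
  have hI₂ := minsetOf_subset P hmin₂
  have hpart : P.part i₁ = P.part i₂ :=
    P.eq_of_mem_parts (P.part_mem.2 hI₁) (P.part_mem.2 hI₂) (P.sup_part_mem hI₁)
      (hsup ▸ P.sup_part_mem hI₂)
  exact le_antisymm (le_of_mem_minsetOf_of_mem_part P hmin₁ (hpart ▸ P.mem_part hI₂))
    (le_of_mem_minsetOf_of_mem_part P hmin₂ (hpart ▸ P.mem_part hI₁))

lemma card_minsetOf_inter_Icc_le (a : ℕ) :
    #(minsetOf P ∩ Icc a n) ≤ #(maxsetOf P ∩ Icc a n) := by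
  refine card_le_card_of_injOn (fun i => (P.part i).sup id) ?_
    ((injOn_sup_part_minsetOf P).mono (by simp))
  intro i hi
  obtain ⟨hmin, hia⟩ := mem_inter.1 hi
  have hI := minsetOf_subset P hmin
  have hmax := sup_part_mem_maxsetOf P hI
  have hle := le_of_mem_minsetOf_of_mem_part P hmin (P.sup_part_mem hI)
  have hmaxI := mem_Icc.1 (maxsetOf_subset P hmax)
  rw [mem_coe, mem_inter, mem_Icc]
  exact ⟨hmax, (mem_Icc.1 hia).1.trans hle, hmaxI.2⟩

end BlockMaxima

section LatticePath

variable (S T : Finset ℕ)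

lemma stepDelta_two_mul_add_one (i : ℕ) :
    stepDelta S T (2 * i + 1) = if i + 1 ∈ S then 0 else -1 := by
  simp only [stepDelta, show (2 * i + 1) % 2 = 1 by omega,
    show (2 * i + 1 + 1) / 2 = i + 1 by omega, if_true]

lemma stepDelta_two_mul (i : ℕ) : stepDelta S T (2 * i) = if i ∈ T then 0 else 1 := by
  simp only [stepDelta, show (2 * i) % 2 = 0 by omega, show 2 * i / 2 = i by omega]
  rfl

lemma stepDelta_eq_one_iff (k : ℕ) : stepDelta S T k = 1 ↔ k % 2 = 0 ∧ k / 2 ∉ T := by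
  unfold stepDelta
  split_ifs <;> simp_all

lemma filter_stepDelta_eq_one (n : ℕ) :
    (Icc 1 (2 * n)).filter (fun k => stepDelta S T k = 1) =
      (Icc 1 n \ T).map ⟨(2 * ·), mul_right_injective₀ two_ne_zero⟩ := by
  ext k
  simp only [mem_filter, stepDelta_eq_one_iff, mem_map, mem_sdiff, mem_Icc,
    Function.Embedding.coeFn_mk]
  constructor
  · rintro ⟨hk, heven, hkT⟩
    exact ⟨k / 2, ⟨by omega, hkT⟩, by omega⟩
  · rintro ⟨i, ⟨hi, hiT⟩, rfl⟩
    exact ⟨by omega, by omega, by simpa using hiT⟩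

lemma natCast_card_inter_Icc_succ (X : Finset ℕ) (i : ℕ) :
    (#(X ∩ Icc 1 (i + 1)) : ℤ) = #(X ∩ Icc 1 i) + if i + 1 ∈ X then 1 else 0 := by
  simp only [inter_comm X, ← filter_mem_eq_inter, card_filter]
  rw [sum_Icc_succ_top (by omega)]
  push_cast
  rfl

lemma pathHt_two_mul (i : ℕ) :
    pathHt S T (2 * i) = (#(S ∩ Icc 1 i) : ℤ) - #(T ∩ Icc 1 i) := by
  induction i with
  | zero => simp [pathHt]
  | succ i ih =>
    have hsteps : pathHt S T (2 * (i + 1)) =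
        pathHt S T (2 * i) + stepDelta S T (2 * i + 1) + stepDelta S T (2 * (i + 1)) := by
      simp only [pathHt, show 2 * (i + 1) = 2 * i + 1 + 1 by ring,
        sum_Icc_succ_top (show 1 ≤ 2 * i + 1 + 1 by omega),
        sum_Icc_succ_top (show 1 ≤ 2 * i + 1 by omega)]
    rw [hsteps, ih, stepDelta_two_mul_add_one, stepDelta_two_mul,
      natCast_card_inter_Icc_succ S, natCast_card_inter_Icc_succ T]
    split_ifs <;> ring

end LatticePath

lemma card_inter_Icc_add_card_inter_Icc {X : Finset ℕ} {n : ℕ} (hX : X ⊆ Icc 1 n) (i : ℕ) :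
    #(X ∩ Icc 1 i) + #(X ∩ Icc (i + 1) n) = #X := by
  have hsdiff : X ∩ Icc (i + 1) n = X \ Icc 1 i := by
    ext x
    simp only [mem_inter, mem_sdiff, mem_Icc]
    constructor <;> rintro ⟨hxX, hx⟩ <;> have := mem_Icc.1 (hX hxX) <;>
      exact ⟨hxX, by omega⟩
  rw [hsdiff, card_inter_add_card_sdiff]

theorem h_multiset_eq_upstep_heights (n : ℕ) (S T : Finset ℕ)
    (hS : S ⊆ Finset.Icc 1 n) (hT : T ⊆ Finset.Icc 1 n) (hcard : S.card = T.card)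
    (hne : (pnST n S T).Nonempty) :
    (Finset.Icc 1 n \ T).val.map (fun i => (hST n S T i : ℤ)) =
      ((Finset.Icc 1 (2 * n)).filter (fun k => stepDelta S T k = 1)).val.map
        (fun k => pathHt S T k) := by
  obtain ⟨P, hP⟩ := hne
  obtain ⟨rfl, rfl⟩ := (mem_filter.1 hP).2
  rw [filter_stepDelta_eq_one, map_val, Multiset.map_map]
  refine Multiset.map_congr rfl fun i _ => ?_
  have hle := card_minsetOf_inter_Icc_le P (i + 1)
  have hsplitS := card_inter_Icc_add_card_inter_Icc hS i
  have hsplitT := card_inter_Icc_add_card_inter_Icc hT i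
  simp only [Function.comp_apply, Function.Embedding.coeFn_mk, pathHt_two_mul, hST,
    Nat.cast_sub hle]
  omega
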